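/- arXiv:math/0602425 — 2 statements merged into one kernel-verified Lean document; each statement's English description precedes it below -/
import Mathlib

section
/- For all a, b and x: x J_1(2√((a+b)x))/√((a+b)x) = ∫_0^x J_0(2√(ay)) J_0(2√(b(x−y))) dy, as an identity of entire functions. -/
/-!
Expanding both Bessel factors into their power series, the integrand becomes a double series
in `t ^ m * (1 - t) ^ n` whose terms are bounded on `[0, 1]` by the summable family
`‖a x‖ ^ m / m! * ‖b x‖ ^ n / n!`, so it may be integrated termwise. The Beta integral
`∫₀¹ t ^ m (1 - t) ^ n dt = m! n! / (m + n + 1)!` and the binomial theorem then collapse the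
terms with `m + n = k` into the `k`-th coefficient of `j1u ((a + b) x)`.
-/

open MeasureTheory

/-- `J0c u = J₀(2√u) = ∑ (-1)ⁿ uⁿ/(n!)²` (entire). -/
noncomputable def J0c (u : ℂ) : ℂ := ∑' n : ℕ, (-1)^n * u^n / ((Nat.factorial n : ℂ))^2

/-- `j1u u = J₁(2√u)/√u = ∑ (-1)ⁿ uⁿ/(n!(n+1)!)` (entire). -/
noncomputable def j1u (u : ℂ) : ℂ :=
  ∑' n : ℕ, (-1)^n * u^n / ((Nat.factorial n : ℂ) * (Nat.factorial (n+1) : ℂ))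

open Finset Nat

theorem HasSum.sum_antidiagonal {A M : Type*} [AddCommMonoid A] [HasAntidiagonal A]
    [AddCommMonoid M] [TopologicalSpace M] [ContinuousAdd M] [RegularSpace M]
    {f : A × A → M} {s : M} (hf : HasSum f s) :
    HasSum (fun n ↦ ∑ p ∈ antidiagonal n, f p) s :=
  (HasAntidiagonal.sigmaAntidiagonalEquivProd.hasSum_iff.2 hf).sigma
    fun n ↦ (antidiagonal n).hasSum f

theorem add_pow_div_factorial {K : Type*} [Field K] [CharZero K] (u v : K) (n : ℕ) :
    (u + v) ^ n / n ! = ∑ p ∈ antidiagonal n, u ^ p.1 / p.1 ! * (v ^ p.2 / p.2 !) := by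
  rw [(Commute.all u v).add_pow', sum_div]
  refine sum_congr rfl fun p hp ↦ ?_
  have := (p.1 + p.2).factorial_ne_zero
  rw [← mem_antidiagonal.mp hp, nsmul_eq_mul, cast_add_choose]
  field_simp

theorem integral_ofReal_pow_mul_one_sub_pow (m n : ℕ) :
    ∫ t in (0:ℝ)..1, (t : ℂ) ^ m * (1 - t) ^ n = m ! * n ! / (m + n + 1)! := by
  have hΓ := Complex.Gamma_mul_Gamma_eq_betaIntegral (s := m + 1) (t := n + 1)
    (by simp; positivity) (by simp; positivity)
  rw [show (m + 1 + (n + 1) : ℂ) = ↑(m + n + 1) + 1 by push_cast; ring] at hΓ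
  simp only [Complex.Gamma_nat_eq_factorial] at hΓ
  rw [hΓ, mul_div_cancel_left₀ _ (by exact_mod_cast (m + n + 1).factorial_ne_zero),
    Complex.betaIntegral]
  refine intervalIntegral.integral_congr fun t _ ↦ ?_
  simp only [add_sub_cancel_right, Complex.cpow_natCast]

theorem norm_mul_ofReal_mul_le {t : ℝ} (ht : |t| ≤ 1) (a x : ℂ) :
    ‖a * (t * x)‖ ≤ ‖a * x‖ := by
  rw [mul_left_comm, norm_mul, Complex.norm_real]
  exact mul_le_of_le_one_left (norm_nonneg _) ht

noncomputable def J0Term (n : ℕ) (u : ℂ) : ℂ := (-1) ^ n * u ^ n / (n ! : ℂ) ^ 2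

theorem J0Term_mul (n : ℕ) (s u : ℂ) : J0Term n (s * u) = s ^ n * J0Term n u := by
  simp only [J0Term, mul_pow]
  ring

@[fun_prop]
theorem continuous_J0Term (n : ℕ) : Continuous (J0Term n) := by
  unfold J0Term
  fun_prop

theorem norm_J0Term_le {n : ℕ} {u : ℂ} {r : ℝ} (hu : ‖u‖ ≤ r) :
    ‖J0Term n u‖ ≤ r ^ n / n ! := by
  have hn : (1 : ℝ) ≤ n ! := by exact_mod_cast n.factorial_pos
  calc ‖J0Term n u‖ = ‖u‖ ^ n / (n ! * n ! : ℝ) := by simp [J0Term, sq]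
    _ ≤ r ^ n / n ! := div_le_div₀ (pow_nonneg ((norm_nonneg u).trans hu) n) (by gcongr)
        (by positivity) (le_mul_of_one_le_right (by positivity) hn)

theorem summable_norm_J0Term (u : ℂ) : Summable fun n ↦ ‖J0Term n u‖ :=
  (Real.summable_pow_div_factorial ‖u‖).of_nonneg_of_le (fun _ ↦ norm_nonneg _)
    fun _ ↦ norm_J0Term_le le_rfl

theorem hasSum_J0Term_mul_J0Term (u v : ℂ) :
    HasSum (fun p : ℕ × ℕ ↦ J0Term p.1 u * J0Term p.2 v) (J0c u * J0c v) := by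
  have hu := summable_norm_J0Term u
  have hv := summable_norm_J0Term v
  exact tsum_mul_tsum_of_summable_norm hu hv ▸ (summable_mul_of_summable_norm hu hv).hasSum

theorem hasSum_integral_J0Term_mul_J0Term (a b x : ℂ) :
    HasSum (fun p : ℕ × ℕ ↦
        ∫ t in (0:ℝ)..1, J0Term p.1 (a * (t * x)) * J0Term p.2 (b * ((1 - t) * x)))
      (∫ t in (0:ℝ)..1, J0c (a * (t * x)) * J0c (b * ((1 - t) * x))) := by
  refine intervalIntegral.hasSum_integral_of_dominated_convergence
    (fun p _ ↦ ‖a * x‖ ^ p.1 / p.1 ! * (‖b * x‖ ^ p.2 / p.2 !))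
    (fun p ↦ (by fun_prop : Continuous _).aestronglyMeasurable)
    (fun p ↦ ae_of_all _ fun t ht ↦ ?_)
    (ae_of_all _ fun _ _ ↦ (Real.summable_pow_div_factorial _).mul_of_nonneg
      (Real.summable_pow_div_factorial _) (fun _ ↦ by positivity) (fun _ ↦ by positivity))
    intervalIntegrable_const
    (ae_of_all _ fun t _ ↦ hasSum_J0Term_mul_J0Term _ _)
  rw [Set.uIoc_of_le zero_le_one] at ht
  have h1t : (1 - t : ℂ) = ((1 - t : ℝ) : ℂ) := by push_cast; ring
  rw [norm_mul, h1t]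
  have ht' : |t| ≤ 1 := abs_le.2 ⟨by linarith [ht.1], ht.2⟩
  have h1t' : |1 - t| ≤ 1 := abs_le.2 ⟨by linarith [ht.2], by linarith [ht.1]⟩
  exact mul_le_mul (norm_J0Term_le (norm_mul_ofReal_mul_le ht' a x))
    (norm_J0Term_le (norm_mul_ofReal_mul_le h1t' b x)) (norm_nonneg _) (by positivity)

theorem integral_J0Term_mul_J0Term (a b x : ℂ) (m n : ℕ) :
    ∫ t in (0:ℝ)..1, J0Term m (a * (t * x)) * J0Term n (b * ((1 - t) * x))
      = (-1) ^ (m + n) / (m + n + 1)! * ((a * x) ^ m / m ! * ((b * x) ^ n / n !)) := by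
  have h : ∀ t : ℝ, J0Term m (a * (t * x)) * J0Term n (b * ((1 - t) * x))
      = J0Term m (a * x) * J0Term n (b * x) * ((t : ℂ) ^ m * (1 - t) ^ n) := fun t ↦ by
    rw [mul_left_comm a, mul_left_comm b, J0Term_mul m (t : ℂ), J0Term_mul n (1 - t)]
    ring
  simp_rw [h]
  rw [intervalIntegral.integral_const_mul, integral_ofReal_pow_mul_one_sub_pow]
  simp only [J0Term]
  field_simp
  ring

theorem sum_antidiagonal_integral_J0Term_mul_J0Term (a b x : ℂ) (k : ℕ) :
    ∑ p ∈ antidiagonal k,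
        ∫ t in (0:ℝ)..1, J0Term p.1 (a * (t * x)) * J0Term p.2 (b * ((1 - t) * x))
      = (-1) ^ k * ((a + b) * x) ^ k / (k ! * (k + 1)!) := by
  have h : ∀ p ∈ antidiagonal k,
      ∫ t in (0:ℝ)..1, J0Term p.1 (a * (t * x)) * J0Term p.2 (b * ((1 - t) * x))
        = (-1) ^ k / (k + 1)! * ((a * x) ^ p.1 / p.1 ! * ((b * x) ^ p.2 / p.2 !)) := fun p hp ↦ by
    rw [integral_J0Term_mul_J0Term, mem_antidiagonal.mp hp]
  rw [sum_congr rfl h, ← mul_sum, ← add_pow_div_factorial, add_mul]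
  field_simp

/-- The integral over the segment from `0` to `x` is parametrized by `y = t·x`, `t ∈ [0,1]`. -/
theorem J0_convolution_formula (a b x : ℂ) :
    x * j1u ((a + b) * x)
      = x * ∫ t in (0:ℝ)..1, J0c (a * (t * x)) * J0c (b * ((1 - t) * x)) := by
  have h := (hasSum_integral_J0Term_mul_J0Term a b x).sum_antidiagonal
  simp only [sum_antidiagonal_integral_J0Term_mul_J0Term] at h
  rw [j1u, h.tsum_eq]
end

section
/- Fix a > 0 and define φ_a^+(x) = I_0(2√(a(a−x))) + ∂/∂x I_0(2√(a(a−x))) (interpreted via the entire power series in x). Then φ_a^+ solves the integral equation φ_a^+(x) + ∫_0^a J_0(2√(xy)) φ_a^+(y) dy = J_0(2√(ax)) for all x. -/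
open MeasureTheory

/-- `I0c u = I₀(2√u) = ∑ uⁿ/(n!)²` (entire). -/
noncomputable def I0c (u : ℂ) : ℂ := ∑' n : ℕ, u^n / ((Nat.factorial n : ℂ))^2

/-- `φₐ⁺(x) = I₀(2√(a(a−x))) + ∂/∂x I₀(2√(a(a−x)))`. -/
noncomputable def phiPlus (a : ℝ) (x : ℂ) : ℂ :=
  I0c ((a : ℂ) * ((a : ℂ) - x)) + deriv (fun z : ℂ => I0c ((a : ℂ) * ((a : ℂ) - z))) x

/-!
Writing `w = a (a - x)` and differentiating the series of `I₀(2√w)` termwise, `φ = phiPlus a`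
becomes `φ(x) = ∑ dₘ wᵐ` with `dₘ = 1/(m!)² - a/(m! (m+1)!)`. Expanding `wᵐ = (a² - a x)ᵐ`
binomially gives the Taylor series `φ(x) = ∑ (-x)ⁿ/n! (Bₙ - Bₙ₊₁)` with `Bₙ = Iₙ(2a)`, while the
Beta integral `∫₀ᵃ yⁿ (a - y)ᵐ dy = aⁿ⁺ᵐ⁺¹ n! m!/(n+m+1)!` gives the moments
`∫₀ᵃ yⁿ φ(y) dy = n! (Bₙ₊₁ - Bₙ) + aⁿ`. Integrating `J₀(2√(xy)) = ∑ (-1)ⁿ (xy)ⁿ/(n!)²` term by term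
against `φ`, the first part of the moments sums to `-φ(x)` and the second to `J₀(2√(ax))`.
-/

open Nat Finset

section PowerSeries

variable {c : ℕ → ℂ}

lemma summable_norm_mul_pow_of_norm_le {C : ℝ} (h : ∀ n, ‖c n‖ ≤ C / n !) (r : ℝ) :
    Summable fun n => ‖c n‖ * r ^ n := by
  refine .of_norm_bounded ((Real.summable_pow_div_factorial |r|).mul_left C) fun n => ?_
  rw [norm_mul, norm_norm, norm_pow, Real.norm_eq_abs, mul_div_assoc', mul_div_right_comm]
  gcongr
  exact h n

lemma sum_antidiagonal_choose_mul_pow {R : Type*} [CommSemiring R] (c : ℕ → R) (x y : R)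
    (m : ℕ) :
    ∑ p ∈ antidiagonal m, c (p.1 + p.2) * (p.1 + p.2).choose p.1 * x ^ p.1 * y ^ p.2
      = c m * (x + y) ^ m := by
  rw [(Commute.all x y).add_pow', mul_sum]
  refine sum_congr rfl fun p hp => ?_
  rw [mem_antidiagonal.mp hp, nsmul_eq_mul]
  ring

variable (hc : ∀ r : ℝ, Summable fun n => ‖c n‖ * r ^ n)
include hc

lemma summable_mul_pow (z : ℂ) : Summable fun n => c n * z ^ n :=
  .of_norm (by simpa only [norm_mul, norm_pow] using hc ‖z‖)

lemma hasDerivAt_tsum_mul_pow (z : ℂ) :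
    HasDerivAt (fun w => ∑' n, c n * w ^ n) (∑' n, (n + 1) * c (n + 1) * z ^ n) z := by
  set R := ‖z‖ + 1
  have hbound : ∀ n, ∀ w ∈ Metric.ball (0 : ℂ) R, ‖c n * w ^ n‖ ≤ ‖c n‖ * R ^ n := by
    intro n w hw
    rw [norm_mul, norm_pow]
    gcongr
    exact (mem_ball_zero_iff.mp hw).le
  have hz : z ∈ Metric.ball (0 : ℂ) R := mem_ball_zero_iff.mpr (lt_add_one _)
  have hdiff : ∀ n, DifferentiableOn ℂ (fun w : ℂ => c n * w ^ n) (Metric.ball 0 R) :=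
    fun n => (differentiable_const _ |>.mul (differentiable_pow n)).differentiableOn
  have hderiv := Complex.hasSum_deriv_of_summable_norm (hc R) hdiff Metric.isOpen_ball hbound hz
  simp only [deriv_const_mul_field', deriv_pow_field] at hderiv
  rw [← hasSum_nat_add_iff' 1] at hderiv
  simp only [range_one, sum_singleton, Nat.cast_zero, zero_mul, mul_zero, sub_zero,
    Nat.add_sub_cancel, Nat.cast_add_one] at hderiv
  have hsum : HasSum (fun n : ℕ => ((n : ℂ) + 1) * c (n + 1) * z ^ n)
      (deriv (fun w => ∑' n, c n * w ^ n) z) := hderiv.congr_fun fun n => by ring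
  rw [hsum.tsum_eq]
  exact ((Complex.differentiableOn_tsum_of_summable_norm (hc R) hdiff Metric.isOpen_ball
    hbound).differentiableAt (Metric.isOpen_ball.mem_nhds hz)).hasDerivAt

lemma continuous_tsum_mul_pow : Continuous fun w => ∑' n, c n * w ^ n :=
  continuous_iff_continuousAt.mpr fun z => (hasDerivAt_tsum_mul_pow hc z).continuousAt

lemma hasSum_tsum_choose_mul_pow (u v : ℂ) :
    HasSum (fun n => ∑' j, c (n + j) * (n + j).choose n * u ^ n * v ^ j)
      (∑' m, c m * (u + v) ^ m) := by
  set F : ℕ × ℕ → ℂ := fun p => c (p.1 + p.2) * (p.1 + p.2).choose p.1 * u ^ p.1 * v ^ p.2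
  let e := HasAntidiagonal.sigmaAntidiagonalEquivProd (A := ℕ)
  have hsummable : Summable F := by
    refine .of_norm (e.summable_iff.mp ((summable_sigma_of_nonneg fun _ => norm_nonneg _).mpr
      ⟨fun m => .of_finite, ?_⟩))
    refine (hc (‖u‖ + ‖v‖)).congr fun m => ?_
    rw [tsum_fintype]
    calc ‖c m‖ * (‖u‖ + ‖v‖) ^ m = ∑ p ∈ antidiagonal m, ‖F p‖ := by
          rw [← sum_antidiagonal_choose_mul_pow (fun n => ‖c n‖)]
          simp [F, norm_pow]
      _ = ∑ p : antidiagonal m, ‖F p‖ := (sum_coe_sort _ _).symm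
  have hdiag : HasSum (fun m => c m * (u + v) ^ m) (∑' p, F p) := by
    refine (e.hasSum_iff.mpr hsummable.hasSum).sigma fun m => ?_
    rw [← sum_antidiagonal_choose_mul_pow, ← sum_coe_sort]
    exact hasSum_fintype _
  convert hsummable.hasSum.prod_fiberwise fun n => (hsummable.prod_factor n).hasSum using 1
  exact hdiag.tsum_eq

lemma hasSum_integral_mul_tsum_mul_pow {h p : ℝ → ℂ} (hh : Continuous h) (hp : Continuous p)
    (a b : ℝ) :
    HasSum (fun n => c n * ∫ t in a..b, h t * p t ^ n)
      (∫ t in a..b, h t * ∑' n, c n * p t ^ n) := by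
  obtain ⟨H, hH⟩ := (isCompact_uIcc (a := a) (b := b)).exists_bound_of_continuousOn hh.continuousOn
  obtain ⟨P, hP⟩ := (isCompact_uIcc (a := a) (b := b)).exists_bound_of_continuousOn hp.continuousOn
  have hbound : ∀ n, ∀ t ∈ Set.uIoc a b, ‖h t * (c n * p t ^ n)‖ ≤ H * (‖c n‖ * P ^ n) := by
    intro n t ht
    have ht := Set.uIoc_subset_uIcc ht
    rw [norm_mul, norm_mul, norm_pow]
    gcongr
    · exact (norm_nonneg _).trans (hH t ht)
    exacts [hH t ht, hP t ht]
  have : HasSum (fun n => ∫ t in a..b, h t * (c n * p t ^ n))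
      (∫ t in a..b, h t * ∑' n, c n * p t ^ n) :=
    intervalIntegral.hasSum_integral_of_dominated_convergence (fun n _ => H * (‖c n‖ * P ^ n))
      (fun n => (by fun_prop : Continuous _).aestronglyMeasurable) (fun n => .of_forall (hbound n))
      (.of_forall fun t _ => (hc P).mul_left H) intervalIntegrable_const
      (.of_forall fun t _ => ((summable_mul_pow hc (p t)).hasSum).mul_left (h t))
  simpa only [mul_left_comm (h _), intervalIntegral.integral_const_mul] using this

end PowerSeries

lemma integral_pow_mul_one_sub_pow (n m : ℕ) :
    ∫ t in (0 : ℝ)..1, (t : ℂ) ^ n * (1 - (t : ℂ)) ^ m = n ! * m ! / (n + m + 1)! := by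
  have hpos (k : ℕ) : 0 < ((k : ℂ) + 1).re := by
    simp only [Complex.add_re, Complex.natCast_re, Complex.one_re]
    positivity
  have hB := Complex.Gamma_mul_Gamma_eq_betaIntegral (hpos n) (hpos m)
  rw [show (n : ℂ) + 1 + (m + 1) = (n + m + 1 : ℕ) + 1 by push_cast; ring] at hB
  simp only [Complex.Gamma_nat_eq_factorial, Complex.betaIntegral, add_sub_cancel_right,
    Complex.cpow_natCast] at hB
  rw [hB, mul_div_cancel_left₀ _ (by exact_mod_cast (n + m + 1).factorial_ne_zero)]

lemma integral_pow_mul_sub_pow (a : ℝ) (n m : ℕ) :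
    ∫ y in (0 : ℝ)..a, (y : ℂ) ^ n * ((a : ℂ) - y) ^ m
      = a ^ (n + m + 1) * (n ! * m ! / (n + m + 1)!) := by
  have hscale := intervalIntegral.smul_integral_comp_mul_left
    (fun y : ℝ => (y : ℂ) ^ n * ((a : ℂ) - y) ^ m) (a := 0) (b := 1) a
  rw [mul_zero, mul_one] at hscale
  rw [← hscale, ← integral_pow_mul_one_sub_pow, Complex.real_smul,
    ← intervalIntegral.integral_const_mul, ← intervalIntegral.integral_const_mul]
  congr 1 with t
  rw [Complex.ofReal_mul, ← mul_one_sub, mul_pow, mul_pow]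
  ring

lemma norm_inv_factorial_mul_le (n k : ℕ) (hk : k ≠ 0) : ‖((n ! : ℂ) * k)⁻¹‖ ≤ 1 / n ! := by
  rw [norm_inv, one_div, ← Nat.cast_mul, Complex.norm_natCast]
  exact inv_anti₀ (by positivity) (mod_cast Nat.le_mul_of_pos_right _ (Nat.pos_of_ne_zero hk))

lemma summable_norm_inv_factorial_mul_mul_pow (k : ℕ → ℕ) (hk : ∀ n, k n ≠ 0) (r : ℝ) :
    Summable fun n => ‖((n ! : ℂ) * k n)⁻¹‖ * r ^ n :=
  summable_norm_mul_pow_of_norm_le (fun n => norm_inv_factorial_mul_le n (k n) (hk n)) r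

/-- `besselITwoMul n z` is the modified Bessel function `Iₙ(2z)`. -/
noncomputable def besselITwoMul (n : ℕ) (z : ℂ) : ℂ :=
  ∑' j : ℕ, z ^ (2 * j + n) / (j ! * (j + n)!)

lemma hasSum_besselITwoMul (n : ℕ) (z : ℂ) :
    HasSum (fun j : ℕ => z ^ (2 * j + n) / (j ! * (j + n)!)) (besselITwoMul n z) := by
  have hsummable := (summable_mul_pow (summable_norm_inv_factorial_mul_mul_pow
    (fun j => (j + n)!) fun _ => factorial_ne_zero _) (z ^ 2)).mul_left (z ^ n)
  refine (hsummable.congr fun j => ?_).hasSum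
  rw [pow_add, pow_mul, div_eq_mul_inv]
  ring

lemma I0c_eq_tsum (u : ℂ) : I0c u = ∑' n : ℕ, ((n ! : ℂ) * n !)⁻¹ * u ^ n :=
  tsum_congr fun n => by rw [div_eq_mul_inv, sq, mul_comm]

lemma J0c_eq_tsum (u : ℂ) : J0c u = ∑' n : ℕ, (-1) ^ n * ((n ! : ℂ) * n !)⁻¹ * u ^ n :=
  tsum_congr fun n => by rw [div_eq_mul_inv, sq]; ring

lemma hasDerivAt_I0c (u : ℂ) :
    HasDerivAt I0c (∑' n : ℕ, ((n ! : ℂ) * (n + 1)!)⁻¹ * u ^ n) u := by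
  have := hasDerivAt_tsum_mul_pow
    (summable_norm_inv_factorial_mul_mul_pow (·!) fun _ => factorial_ne_zero _) u
  rw [← funext I0c_eq_tsum] at this
  convert this using 1
  refine tsum_congr fun n => ?_
  rw [factorial_succ]
  push_cast
  field_simp

noncomputable def phiPlusCoeff (a : ℂ) (m : ℕ) : ℂ :=
  ((m ! : ℂ) * m !)⁻¹ - a * ((m ! : ℂ) * (m + 1)!)⁻¹

lemma summable_norm_phiPlusCoeff_mul_pow (a : ℂ) (r : ℝ) :
    Summable fun m => ‖phiPlusCoeff a m‖ * r ^ m := by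
  refine summable_norm_mul_pow_of_norm_le (C := 1 + ‖a‖) (fun m => ?_) r
  calc ‖phiPlusCoeff a m‖ ≤ ‖((m ! : ℂ) * m !)⁻¹‖ + ‖a‖ * ‖((m ! : ℂ) * (m + 1)!)⁻¹‖ := by
        rw [phiPlusCoeff, ← norm_mul]; exact norm_sub_le _ _
    _ ≤ 1 / m ! + ‖a‖ * (1 / m !) := by
        gcongr
        exacts [norm_inv_factorial_mul_le _ _ (factorial_ne_zero _),
          norm_inv_factorial_mul_le _ _ (factorial_ne_zero _)]
    _ = (1 + ‖a‖) / m ! := by ring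

lemma phiPlus_eq_tsum (a : ℝ) (x : ℂ) :
    phiPlus a x = ∑' m, phiPlusCoeff a m * (a * (a - x)) ^ m := by
  have hinner : HasDerivAt (fun z : ℂ => (a : ℂ) * (a - z)) (-a) x := by
    simpa using ((hasDerivAt_id x).const_sub (a : ℂ)).const_mul (a : ℂ)
  have hderiv : HasDerivAt (fun z => I0c (a * (a - z))) _ x := (hasDerivAt_I0c _).comp x hinner
  rw [phiPlus, hderiv.deriv, I0c_eq_tsum, mul_neg, ← sub_eq_add_neg, ← tsum_mul_right,
    ← Summable.tsum_sub]
  · exact tsum_congr fun m => by rw [phiPlusCoeff]; ring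
  · exact summable_mul_pow
      (summable_norm_inv_factorial_mul_mul_pow (·!) fun _ => factorial_ne_zero _) _
  · exact (summable_mul_pow (summable_norm_inv_factorial_mul_mul_pow (fun n => (n + 1)!)
      fun _ => factorial_ne_zero _) _).mul_right _

lemma continuous_phiPlus (a : ℝ) : Continuous (phiPlus a) := by
  simp_rw [funext (phiPlus_eq_tsum a)]
  exact (continuous_tsum_mul_pow (summable_norm_phiPlusCoeff_mul_pow a)).comp (by fun_prop)

lemma phiPlusCoeff_add_mul_choose (a x : ℂ) (n j : ℕ) :
    phiPlusCoeff a (n + j) * (n + j).choose n * (-(a * x)) ^ n * (a ^ 2) ^ j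
      = (-x) ^ n / n ! * (a ^ (2 * j + n) / (j ! * (j + n)!)
          - a ^ (2 * j + (n + 1)) / (j ! * (j + (n + 1))!)) := by
  rw [phiPlusCoeff, Nat.cast_add_choose, add_comm j n, ← add_assoc j, add_comm j n,
    factorial_succ (n + j)]
  have := factorial_ne_zero n
  have := factorial_ne_zero j
  have := factorial_ne_zero (n + j)
  push_cast
  field_simp
  ring

lemma hasSum_phiPlus (a : ℝ) (x : ℂ) :
    HasSum (fun n => (-x) ^ n / n ! * (besselITwoMul n a - besselITwoMul (n + 1) a))
      (phiPlus a x) := by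
  rw [phiPlus_eq_tsum, show (a : ℂ) * (a - x) = -(a * x) + a ^ 2 by ring]
  refine (hasSum_tsum_choose_mul_pow (summable_norm_phiPlusCoeff_mul_pow a) _ _).congr_fun
    fun n => ?_
  refine (((hasSum_besselITwoMul n a).sub (hasSum_besselITwoMul (n + 1) a)).mul_left _
    |>.congr_fun fun j => ?_).tsum_eq.symm
  exact phiPlusCoeff_add_mul_choose a x n j

lemma phiPlusCoeff_mul_integral (a : ℝ) (n m : ℕ) :
    phiPlusCoeff a m * ∫ y in (0 : ℝ)..a, (y : ℂ) ^ n * (a * (a - y)) ^ m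
      = n ! * ((a : ℂ) ^ (2 * m + (n + 1)) / (m ! * (m + (n + 1))!)
          - a ^ (2 * (m + 1) + n) / ((m + 1)! * (m + 1 + n)!)) := by
  simp_rw [mul_pow, mul_left_comm _ ((a : ℂ) ^ m)]
  rw [intervalIntegral.integral_const_mul, integral_pow_mul_sub_pow, phiPlusCoeff,
    show m + (n + 1) = n + m + 1 by omega, show m + 1 + n = n + m + 1 by omega, factorial_succ m]
  have := factorial_ne_zero n
  have := factorial_ne_zero m
  have := factorial_ne_zero (n + m + 1)
  push_cast
  field_simp
  ring

lemma integral_pow_mul_phiPlus (a : ℝ) (n : ℕ) :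
    ∫ y in (0 : ℝ)..a, (y : ℂ) ^ n * phiPlus a y
      = n ! * (besselITwoMul (n + 1) a - besselITwoMul n a) + a ^ n := by
  have h := hasSum_integral_mul_tsum_mul_pow (summable_norm_phiPlusCoeff_mul_pow a)
    (h := fun y : ℝ => (y : ℂ) ^ n) (p := fun y : ℝ => (a : ℂ) * (a - y)) (by fun_prop)
    (by fun_prop) 0 a
  simp_rw [← phiPlus_eq_tsum, phiPlusCoeff_mul_integral] at h
  have hshift := (hasSum_nat_add_iff' 1).mpr (hasSum_besselITwoMul n a)
  rw [h.unique (((hasSum_besselITwoMul (n + 1) a).sub hshift).mul_left (n ! : ℂ)),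
    sum_range_one]
  have := factorial_ne_zero n
  simp only [mul_zero, zero_add, factorial_zero, cast_one, one_mul]
  field_simp
  ring

theorem phiPlus_integral_equation_general (a : ℝ) (x : ℂ) :
    phiPlus a x + (∫ y in (0:ℝ)..a, J0c (x * (y : ℂ)) * phiPlus a (y : ℂ))
      = J0c ((a : ℂ) * x) := by
  have hJ (r : ℝ) : Summable fun n => ‖(-1) ^ n * ((n ! : ℂ) * n !)⁻¹‖ * r ^ n :=
    (summable_norm_inv_factorial_mul_mul_pow (·!) (fun _ => factorial_ne_zero _) r).congr
      fun n => by rw [norm_mul, norm_pow, norm_neg, norm_one, one_pow, one_mul]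
  have hint := hasSum_integral_mul_tsum_mul_pow hJ (h := fun y : ℝ => phiPlus a y)
    (p := fun y : ℝ => x * y) ((continuous_phiPlus a).comp Complex.continuous_ofReal)
    (by fun_prop) 0 a
  simp_rw [← J0c_eq_tsum, mul_pow, mul_left_comm _ (x ^ _), intervalIntegral.integral_const_mul,
    mul_comm (phiPlus _ _), integral_pow_mul_phiPlus] at hint
  have hsum := (hasSum_phiPlus a x).neg.add (summable_mul_pow hJ (a * x)).hasSum
  rw [← J0c_eq_tsum] at hsum
  suffices ∫ y in (0:ℝ)..a, J0c (x * y) * phiPlus a y = -phiPlus a x + J0c (a * x) by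
    rw [this]; ring
  refine hint.unique (hsum.congr_fun fun n => ?_)
  have := factorial_ne_zero n
  rw [mul_pow, neg_pow]
  field_simp
  ring

theorem phiPlus_integral_equation (a : ℝ) (ha : 0 < a) (x : ℂ) :
    phiPlus a x + (∫ y in (0:ℝ)..a, J0c (x * (y : ℂ)) * phiPlus a (y : ℂ))
      = J0c ((a : ℂ) * x) :=
  phiPlus_integral_equation_general a x
end
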